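/- If G is a connected simple graph with edge metric dimension edim(G) = 1, then G is a path on at least 3 vertices, and consequently its metric dimension satisfies dim(G) = 1. -/
import Mathlib


/-- `S` is a metric generator of `G`: every pair of distinct vertices is
identified by some vertex of `S` via distances. -/
def IsMetricGenerator {V : Type*} (G : SimpleGraph V) (S : Set V) : Prop :=
  ∀ u v : V, u ≠ v → ∃ z ∈ S, G.dist u z ≠ G.dist v z

/-- The metric dimension of `G`: the least cardinality of a (finite) metric generator. -/
noncomputable def metricDim {V : Type*} (G : SimpleGraph V) : ℕ :=
  sInf {n | ∃ S : Set V, S.Finite ∧ IsMetricGenerator G S ∧ S.ncard = n}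

/-- Distance from an edge (unordered pair) to a vertex:
`d(uv, z) = min (d u z) (d v z)`. -/
noncomputable def edgeDist {V : Type*} (G : SimpleGraph V) (e : Sym2 V) (z : V) : ℕ :=
  Sym2.lift ⟨fun u v => min (G.dist u z) (G.dist v z), fun u v => by simp [min_comm]⟩ e

/-- `S` is an edge metric generator of `G`: every pair of distinct edges is
distinguished by some vertex of `S`. -/
def IsEdgeMetricGenerator {V : Type*} (G : SimpleGraph V) (S : Set V) : Prop :=
  ∀ e ∈ G.edgeSet, ∀ f ∈ G.edgeSet, e ≠ f → ∃ z ∈ S, edgeDist G e z ≠ edgeDist G f z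

/-- The edge metric dimension of `G`: the least cardinality of a (finite) edge
metric generator. -/
noncomputable def edgeMetricDim {V : Type*} (G : SimpleGraph V) : ℕ :=
  sInf {n | ∃ S : Set V, S.Finite ∧ IsEdgeMetricGenerator G S ∧ S.ncard = n}

private lemma edgeDist_mk {V : Type*} (G : SimpleGraph V) (a b z : V) :
    edgeDist G s(a, b) z = min (G.dist a z) (G.dist b z) := rfl

/-- In a connected graph, a vertex at distance `k+1` from `z` has a neighbor at
distance `k` from `z`. -/
private lemma exists_adj_dist_aux {V : Type*} {G : SimpleGraph V} (hc : G.Connected)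
    {z v : V} {k : ℕ} (hd : G.dist z v = k + 1) : ∃ w, G.Adj w v ∧ G.dist z w = k := by
  obtain ⟨p, hp⟩ := hc.exists_walk_length_eq_dist v z
  rw [SimpleGraph.dist_comm, hd] at hp
  cases p with
  | nil => simp at hp
  | @cons _ w _ hadj q =>
    refine ⟨w, hadj.symm, ?_⟩
    have hq : q.length = k := by
      simpa [SimpleGraph.Walk.length_cons] using hp
    have h1 : G.dist z w ≤ k := by
      rw [SimpleGraph.dist_comm]
      exact hq ▸ SimpleGraph.dist_le q
    have h2 : G.dist z v ≤ G.dist z w + G.dist w v := hc.dist_triangle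
    have h3 : G.dist w v = 1 := SimpleGraph.dist_eq_one_iff_adj.mpr hadj.symm
    omega

/-- If a connected graph has edge metric dimension `1`, then it is a path on at
least `3` vertices and consequently has metric dimension `1`. -/
theorem edim_eq_one_imp_path {V : Type*} [Fintype V] (G : SimpleGraph V)
    (hc : G.Connected) (h : edgeMetricDim G = 1) :
    (∃ n : ℕ, 3 ≤ n ∧ Nonempty (G ≃g SimpleGraph.pathGraph n)) ∧ metricDim G = 1 := by
  classical
  have h' : sInf {n | ∃ S : Set V, S.Finite ∧ IsEdgeMetricGenerator G S ∧ S.ncard = n} = 1 := h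
  have hEne : {n | ∃ S : Set V, S.Finite ∧ IsEdgeMetricGenerator G S ∧ S.ncard = n}.Nonempty := by
    by_contra hne
    rw [Set.not_nonempty_iff_eq_empty] at hne
    rw [hne, Nat.sInf_empty] at h'
    exact absurd h' (by norm_num)
  have h1E : 1 ∈ {n | ∃ S : Set V, S.Finite ∧ IsEdgeMetricGenerator G S ∧ S.ncard = n} := by
    have := Nat.sInf_mem hEne
    rwa [h'] at this
  have h0E : 0 ∉ {n | ∃ S : Set V, S.Finite ∧ IsEdgeMetricGenerator G S ∧ S.ncard = n} := by
    intro h0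
    have := Nat.sInf_le h0
    omega
  obtain ⟨S, hSfin, hSgen, hScard⟩ := h1E
  obtain ⟨z, rfl⟩ := Set.ncard_eq_one.mp hScard
  have H : ∀ e ∈ G.edgeSet, ∀ f ∈ G.edgeSet, e ≠ f → edgeDist G e z ≠ edgeDist G f z := by
    intro e he f hf hef
    obtain ⟨z', hz', hne⟩ := hSgen e he f hf hef
    rw [Set.mem_singleton_iff] at hz'
    subst hz'
    exact hne
  -- two distinct edges exist
  have hne2 : ∃ e ∈ G.edgeSet, ∃ f ∈ G.edgeSet, e ≠ f := by
    by_contra hcon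
    push_neg at hcon
    exact h0E ⟨∅, Set.finite_empty,
      fun e he f hf hef => absurd (hcon e he f hf) hef, by simp⟩
  -- injectivity of distances from z
  have hinj : ∀ u v : V, G.dist z u = G.dist z v → u = v := by
    intro u v huv
    rcases Nat.eq_zero_or_pos (G.dist z u) with h0 | hpos
    · have hu : z = u := hc.dist_eq_zero_iff.mp h0
      have hv : z = v := hc.dist_eq_zero_iff.mp (huv ▸ h0)
      exact hu ▸ hv
    · obtain ⟨k, hk⟩ : ∃ k, G.dist z u = k + 1 := ⟨G.dist z u - 1, by omega⟩
      obtain ⟨w, hw, hwd⟩ := exists_adj_dist_aux hc hk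
      obtain ⟨w', hw', hwd'⟩ := exists_adj_dist_aux hc (huv ▸ hk)
      have he : s(w, u) ∈ G.edgeSet := hw
      have hf : s(w', v) ∈ G.edgeSet := hw'
      have hd1 : edgeDist G s(w, u) z = k := by
        rw [edgeDist_mk, SimpleGraph.dist_comm, hwd, SimpleGraph.dist_comm, hk]
        omega
      have hd2 : edgeDist G s(w', v) z = k := by
        rw [edgeDist_mk, SimpleGraph.dist_comm, hwd', SimpleGraph.dist_comm, ← huv, hk]
        omega
      have heq : s(w, u) = s(w', v) := by
        by_contra hne
        exact H _ he _ hf hne (by rw [hd1, hd2])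
      rw [Sym2.eq_iff] at heq
      rcases heq with ⟨rfl, rfl⟩ | ⟨rfl, rfl⟩
      · rfl
      · omega
  set n := Fintype.card V with hn
  set T : Finset ℕ := Finset.image (fun v => G.dist z v) Finset.univ with hT
  have hTcard : T.card = n := by
    rw [hT, Finset.card_image_of_injective _ (fun u v huv => hinj u v huv), Finset.card_univ]
  have hdown : ∀ k, k + 1 ∈ T → k ∈ T := by
    intro k hk
    simp only [hT, Finset.mem_image, Finset.mem_univ, true_and] at hk ⊢
    obtain ⟨v, hv⟩ := hk
    obtain ⟨w, _, hw⟩ := exists_adj_dist_aux hc hv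
    exact ⟨w, hw⟩
  have hseg : ∀ m, m ∈ T → ∀ k, k ≤ m → k ∈ T := by
    intro m
    induction m with
    | zero => intro hm k hk; exact (Nat.le_zero.mp hk) ▸ hm
    | succ m ih =>
      intro hm k hk
      rcases Nat.lt_or_ge k (m + 1) with hlt | hge
      · exact ih (hdown m hm) k (by omega)
      · have : k = m + 1 := by omega
        exact this ▸ hm
  have hbound : ∀ m ∈ T, m < n := by
    intro m hm
    have hsub : Finset.range (m + 1) ⊆ T := by
      intro k hk
      exact hseg m hm k (Nat.lt_succ_iff.mp (Finset.mem_range.mp hk))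
    have := Finset.card_le_card hsub
    rw [Finset.card_range, hTcard] at this
    omega
  have hTeq : T = Finset.range n :=
    Finset.eq_of_subset_of_card_le
      (fun m hm => Finset.mem_range.mpr (hbound m hm))
      (by rw [hTcard, Finset.card_range])
  have hlt : ∀ v, G.dist z v < n := by
    intro v
    exact hbound _ (by simp [hT])
  have hsurj : ∀ k, k < n → ∃ v, G.dist z v = k := by
    intro k hk
    have : k ∈ T := hTeq ▸ Finset.mem_range.mpr hk
    simpa [hT] using this
  -- find an edge far from z, giving a vertex c with dist z c ≥ 1 adjacent to d ≠ z
  obtain ⟨e0, he0, f0, hf0, hef0⟩ := hne2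
  have hEdne := H e0 he0 f0 hf0 hef0
  obtain ⟨e1, he1, he1pos⟩ : ∃ e ∈ G.edgeSet, 1 ≤ edgeDist G e z := by
    rcases Nat.eq_zero_or_pos (edgeDist G e0 z) with h0 | hpos
    · exact ⟨f0, hf0, by omega⟩
    · exact ⟨e0, he0, hpos⟩
  obtain ⟨c, d, rfl⟩ : ∃ c d, e1 = s(c, d) := by
    obtain ⟨⟨c, d⟩, hcd⟩ := Quot.exists_rep e1
    exact ⟨c, d, hcd.symm⟩
  have hadjcd : G.Adj c d := (G.mem_edgeSet).mp he1
  rw [edgeDist_mk] at he1pos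
  have hc1 : 1 ≤ G.dist z c := by
    rw [SimpleGraph.dist_comm]
    exact le_trans he1pos (min_le_left _ _)
  have hd1 : 1 ≤ G.dist z d := by
    rw [SimpleGraph.dist_comm]
    exact le_trans he1pos (min_le_right _ _)
  have hzc : z ≠ c := by
    intro hzc
    rw [← hzc, SimpleGraph.dist_self] at hc1
    omega
  have h3n : 3 ≤ n := by
    have h1 := hlt c
    have h2 := hlt d
    have hne' : G.dist z c ≠ G.dist z d := fun hh => hadjcd.ne (hinj _ _ hh)
    omega
  constructor
  · refine ⟨n, h3n, ⟨?_⟩⟩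
    have hbij : Function.Bijective (fun v => (⟨G.dist z v, hlt v⟩ : Fin n)) := by
      constructor
      · intro u v huv
        exact hinj u v (congrArg Fin.val huv)
      · rintro ⟨k, hk⟩
        obtain ⟨v, hv⟩ := hsurj k hk
        exact ⟨v, by simp [hv]⟩
    refine ⟨Equiv.ofBijective _ hbij, ?_⟩
    intro a b
    show (SimpleGraph.pathGraph n).Adj ⟨G.dist z a, hlt a⟩ ⟨G.dist z b, hlt b⟩ ↔ G.Adj a b
    rw [SimpleGraph.pathGraph_adj]
    simp only []
    constructor
    · rintro (hab | hab)
      · obtain ⟨w, hw, hwd⟩ := exists_adj_dist_aux hc hab.symm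
        have : w = a := hinj w a hwd
        exact this ▸ hw
      · obtain ⟨w, hw, hwd⟩ := exists_adj_dist_aux hc hab.symm
        have : w = b := hinj w b hwd
        exact (this ▸ hw).symm
    · intro hadj
      have hne' : G.dist z a ≠ G.dist z b := fun hh => hadj.ne (hinj _ _ hh)
      have t1 : G.dist z b ≤ G.dist z a + G.dist a b := hc.dist_triangle
      have t2 : G.dist z a ≤ G.dist z b + G.dist b a := hc.dist_triangle
      have e1 : G.dist a b = 1 := SimpleGraph.dist_eq_one_iff_adj.mpr hadj
      have e2 : G.dist b a = 1 := SimpleGraph.dist_eq_one_iff_adj.mpr hadj.symm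
      omega
  · have hgen1 : IsMetricGenerator G {z} := by
      intro u v huv
      refine ⟨z, rfl, fun hh => huv (hinj u v ?_)⟩
      rw [SimpleGraph.dist_comm (u := z) (v := u), SimpleGraph.dist_comm (u := z) (v := v)]
      exact hh
    have hmem1 : 1 ∈ {m | ∃ S : Set V, S.Finite ∧ IsMetricGenerator G S ∧ S.ncard = m} :=
      ⟨{z}, Set.finite_singleton z, hgen1, Set.ncard_singleton z⟩
    have h0M : 0 ∉ {m | ∃ S : Set V, S.Finite ∧ IsMetricGenerator G S ∧ S.ncard = m} := by
      rintro ⟨S, hSf, hSg, hS0⟩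
      rw [Set.ncard_eq_zero hSf] at hS0
      subst hS0
      obtain ⟨z', hz', _⟩ := hSg z c hzc
      exact hz'
    show sInf {m | ∃ S : Set V, S.Finite ∧ IsMetricGenerator G S ∧ S.ncard = m} = 1
    refine le_antisymm (Nat.sInf_le hmem1) ?_
    rcases Nat.eq_zero_or_pos
        (sInf {m | ∃ S : Set V, S.Finite ∧ IsMetricGenerator G S ∧ S.ncard = m}) with h0' | h1'
    · exact absurd (h0' ▸ Nat.sInf_mem ⟨1, hmem1⟩) h0M
    · exact h1'
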